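/- arXiv:2301.13559 — 2 statements merged into one kernel-verified Lean document; each statement's English description precedes it below -/
import Mathlib

section
/- For each α ∈ {1,…,d}, fix a finite set A^α = {x_1^α, …, x_{n_α}^α} ⊂ Z^d ordered so that x_i^α·e_α ≥ x_j^α·e_α whenever i ≤ j, and set A_i^α = {x_j^α + e_α : 1 ≤ j ≤ i} ∪ {x_j^α : i+1 ≤ j ≤ n_α} for 0 ≤ i ≤ n_α. Let L be large enough that all the sets x + A_i^α embed in the torus Z^d/LZ^d. Then for every configuration η ∈ {0,1}^{Z^d/LZ^d} and every α, the total rate of forward transitions equals the total rate of backward transitions: Σ_{i=0}^{n_α−1} Σ_{x ∈ Z^d/LZ^d} 1[η ≡ 0 on x+A_i^α] · η(x + x_{i+1}^α + e_α) = Σ_{i=1}^{n_α} Σ_{x ∈ Z^d/LZ^d} 1[η ≡ 0 on x+A_i^α] · η(x + x_i^α). Equivalently, the total particle current of the auxiliary dynamics vanishes for every configuration on the torus. -/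
noncomputable section
open scoped Classical

namespace KCLGd

/-- Sites of the `d`-dimensional lattice `ℤ^d`. -/
abbrev Site (d : ℕ) := Fin d → ℤ

/-- Particle configurations: a site is *empty* if the value is `false`
and *occupied* if the value is `true`. -/
abbrev Config (d : ℕ) := Site d → Bool

/-- The standard basis vector `e_i`. -/
def unit {d : ℕ} (i : Fin d) : Site d := fun j => if j = i then 1 else 0

/-- `e` is one of the `2d` unit directions `±e_1, …, ±e_d`. -/
def IsDir {d : ℕ} (e : Site d) : Prop := ∃ i : Fin d, e = unit i ∨ e = -unit i

/-- The configuration `η` with the occupation values at `x` and `y` exchanged. -/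
def exch {d : ℕ} (x y : Site d) (η : Config d) : Config d :=
  fun z => if z = x then η y else if z = y then η x else η z

/-- The configuration `η` with the occupation value at `x` flipped. -/
def flipAt {d : ℕ} (x : Site d) (η : Config d) : Config d :=
  fun z => if z = x then !η x else η z

/-- Translated configuration `(τ_z η)(w) = η (w - z)`. -/
def tauC {d : ℕ} (z : Site d) (η : Config d) : Config d := fun w => η (w - z)

/-- Real-valued occupation number (`1` = occupied, `0` = empty). -/
def ind (b : Bool) : ℝ := if b then 1 else 0

/-- Euclidean inner product of `u ∈ ℝ^d` with a lattice vector. -/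
def dot {d : ℕ} (u : Fin d → ℝ) (y : Site d) : ℝ := ∑ i, u i * (y i : ℝ)

/-- A family of jump rates `c_{x,y}(η)` for pairs of sites. -/
abbrev Rates (d : ℕ) := Site d → Site d → Config d → ℝ

/-- Membership in the box `x + [-l, l]^d`. -/
def inBox {d : ℕ} (x : Site d) (l : ℕ) (z : Site d) : Prop := ∀ i, |z i - x i| ≤ (l : ℤ)

/-- A kinetically constrained lattice gas in dimension `d`: nearest-neighbour
jump rates satisfying the standard assumptions (values in `{0} ∪ [1, cmax]`,
independence of the occupation of the exchanged sites, nondegeneracy,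
monotonicity, translation invariance and finite range `R`). -/
structure KCLG (d : ℕ) where
  c : Rates d
  cmax : ℝ
  R : ℕ
  one_le_cmax : 1 ≤ cmax
  rate_range : ∀ x y η, IsDir (y - x) → c x y η = 0 ∨ (1 ≤ c x y η ∧ c x y η ≤ cmax)
  indep : ∀ x y η η', IsDir (y - x) → (∀ z, z ≠ x → z ≠ y → η z = η' z) → c x y η = c x y η'
  nondeg_pos : ∀ x y, IsDir (y - x) → ∃ η, 1 ≤ c x y η
  nondeg_zero : ∀ x y, IsDir (y - x) → ∃ η, c x y η = 0
  mono : ∀ x y η η', IsDir (y - x) → (∀ z, η z ≤ η' z) → c x y η' ≤ c x y η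
  transl : ∀ x y z η, c x y η = c (x + z) (y + z) (tauC z η)
  finRange : ∀ x y η η', IsDir (y - x) → (∀ z, inBox x R z → η z = η' z) → c x y η = c x y η'

/-- A multistep move on the infinite lattice for the rates `c`: a `T`-step
sequence of allowed exchanges, defined for every initial configuration in the
domain. -/
structure Move {d : ℕ} (c : Rates d) where
  T : ℕ
  Dom : Set (Config d)
  cfg : Config d → ℕ → Config d
  xs : Config d → ℕ → Site d
  es : Config d → ℕ → Site d
  init : ∀ a ∈ Dom, cfg a 0 = a
  dir : ∀ a ∈ Dom, ∀ t, t < T → IsDir (es a t)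
  step : ∀ a ∈ Dom, ∀ t, t < T → cfg a (t + 1) = exch (xs a t) (xs a t + es a t) (cfg a t)
  rate : ∀ a ∈ Dom, ∀ t, t < T → 1 ≤ c (xs a t) (xs a t + es a t) (cfg a t)

namespace Move

/-- A move is deterministic if the exchanged edges do not depend on the
initial configuration. -/
def Deterministic {d : ℕ} {c : Rates d} (M : Move c) : Prop :=
  ∀ a ∈ M.Dom, ∀ b ∈ M.Dom, ∀ t, t < M.T → M.xs a t = M.xs b t ∧ M.es a t = M.es b t

/-- The permutation associated with a move and an initial configuration:
the product of the transpositions `(x_{T-1}, x_{T-1}+e_{T-1}) ⋯ (x_0, x_0+e_0)`. -/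
def permOf {d : ℕ} {c : Rates d} (M : Move c) (a : Config d) : Equiv.Perm (Site d) :=
  (List.range M.T).foldl (fun σ t => Equiv.swap (M.xs a t) (M.xs a t + M.es a t) * σ) 1

/-- A move is compatible with the permutation `σ` if its associated
permutation equals `σ` for every configuration in the domain. -/
def CompatibleWith {d : ℕ} {c : Rates d} (M : Move c) (σ : Equiv.Perm (Site d)) : Prop :=
  ∀ a ∈ M.Dom, M.permOf a = σ

/-- The tracer position associated with a move, starting at `z0`. -/
def tracer {d : ℕ} {c : Rates d} (M : Move c) (a : Config d) (z0 : Site d) : ℕ → Site d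
  | 0 => z0
  | t + 1 =>
    if M.tracer a z0 t = M.xs a t ∧ M.cfg a t (M.xs a t + M.es a t) = false then
      M.xs a t + M.es a t
    else if M.tracer a z0 t = M.xs a t + M.es a t ∧ M.cfg a t (M.xs a t) = false then
      M.xs a t
    else M.tracer a z0 t

end Move

/-- `M` is a translation move `Tr_e(x+C)` in `x + [-l,l]^d`. -/
def IsTrMove {d : ℕ} (c : Rates d) (C : Finset (Site d)) (l : ℕ) (e x : Site d)
    (M : Move c) : Prop :=
  M.Dom = {η : Config d | ∀ y ∈ C, η (x + y) = false} ∧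
  M.Deterministic ∧
  (∃ σ : Equiv.Perm (Site d), M.CompatibleWith σ ∧ ∀ y ∈ C, σ (x + y) = x + y + e) ∧
  ∀ a ∈ M.Dom, ∀ t, t < M.T → inBox x l (M.xs a t) ∧ inBox x l (M.xs a t + M.es a t)

/-- `M` is an exchange move `Ex_e(x+C)`. -/
def IsExMove {d : ℕ} (c : Rates d) (C : Finset (Site d)) (l : ℕ) (e x : Site d)
    (M : Move c) : Prop :=
  M.Dom = {η : Config d | ∀ y ∈ C, η (x + y) = false} ∧
  M.Deterministic ∧
  M.CompatibleWith (Equiv.swap (x + (l : ℤ) • e) (x + (l : ℤ) • e + e)) ∧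
  ∀ a ∈ M.Dom, ∀ t, t < M.T →
    (inBox x l (M.xs a t) ∨ M.xs a t = x + ((l : ℤ) + 1) • e) ∧
    (inBox x l (M.xs a t + M.es a t) ∨ M.xs a t + M.es a t = x + ((l : ℤ) + 1) • e)

/-- A translation move of `x + C` in direction `e` exists. -/
def HasTr {d : ℕ} (c : Rates d) (C : Finset (Site d)) (l : ℕ) (e x : Site d) : Prop :=
  ∃ M : Move c, IsTrMove c C l e x M

/-- An exchange move using `x + C` in direction `e` exists. -/
def HasEx {d : ℕ} (c : Rates d) (C : Finset (Site d)) (l : ℕ) (e x : Site d) : Prop :=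
  ∃ M : Move c, IsExMove c C l e x M

/-- `C` is a mobile cluster, with parameter `l`. -/
def IsMobileClusterWith {d : ℕ} (c : Rates d) (C : Finset (Site d)) (l : ℕ) : Prop :=
  0 < l ∧ ∀ e, IsDir e → ∀ x, HasTr c C l e x ∧ HasEx c C l e x

/-- `C` is a mobile cluster. -/
def IsMobileCluster {d : ℕ} (c : Rates d) (C : Finset (Site d)) : Prop :=
  ∃ l : ℕ, IsMobileClusterWith c C l

/-- A kinetically constrained lattice gas is noncooperative if it admits a
mobile cluster. -/
def Noncooperative {d : ℕ} (c : Rates d) : Prop :=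
  ∃ C : Finset (Site d), IsMobileCluster c C

/-! ### Finite boxes, measures and Dirichlet forms -/

/-- The box `Λ = [L]^d = {1, …, L}^d`. -/
def boxL (d L : ℕ) : Finset (Site d) := Fintype.piFinset fun _ => Finset.Icc 1 (L : ℤ)

/-- Extension of a configuration on `Λ` to the whole lattice by the boundary
value `bc` (`false` = empty boundary conditions, `true` = occupied). -/
def extB {d : ℕ} (Λ : Finset (Site d)) (bc : Bool) (σ : {x // x ∈ Λ} → Bool) : Config d :=
  fun z => if h : z ∈ Λ then σ ⟨z, h⟩ else bc

/-- Bernoulli weight of a configuration on `Λ`: each site independently empty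
with probability `q`. -/
def wt {d : ℕ} (q : ℝ) (Λ : Finset (Site d)) (σ : {x // x ∈ Λ} → Bool) : ℝ :=
  ∏ x : {x // x ∈ Λ}, (if σ x then 1 - q else q)

/-- Expectation with respect to the Bernoulli product measure `μ` on `{0,1}^Λ`. -/
def expB {d : ℕ} (q : ℝ) (Λ : Finset (Site d)) (F : ({x // x ∈ Λ} → Bool) → ℝ) : ℝ :=
  ∑ σ : {x // x ∈ Λ} → Bool, wt q Λ σ * F σ

/-- Variance with respect to the Bernoulli product measure on `{0,1}^Λ`. -/
def varB {d : ℕ} (q : ℝ) (Λ : Finset (Site d)) (F : ({x // x ∈ Λ} → Bool) → ℝ) : ℝ :=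
  expB q Λ fun σ => (F σ - expB q Λ F) ^ 2

/-- `x` belongs to the boundary `∂Λ`: it lies in `Λ` and has a neighbour
outside `Λ`. -/
def isBdry {d : ℕ} (Λ : Finset (Site d)) (x : Site d) : Prop :=
  x ∈ Λ ∧ ∃ i : Fin d, x + unit i ∉ Λ ∨ x - unit i ∉ Λ

/-- Number of empty sites of `η` inside `Λ`. -/
def nEmptyIn {d : ℕ} (Λ : Finset (Site d)) (η : Config d) : ℕ :=
  (Λ.filter fun x => η x = false).card

/-! ### Local functions and expectations on the infinite lattice -/

/-- `F` depends only on the coordinates in `S`. -/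
def IsLocal {d : ℕ} (F : Config d → ℝ) (S : Finset (Site d)) : Prop :=
  ∀ η η' : Config d, (∀ x ∈ S, η x = η' x) → F η = F η'

/-- Expectation, with respect to the Bernoulli product measure in which each
site is independently empty with probability `q`, of a function depending only
on the coordinates in `T`. -/
def dExp {d : ℕ} (q : ℝ) (T : Finset (Site d)) (F : Config d → ℝ) : ℝ :=
  ∑ σ : {x // x ∈ T} → Bool, wt q T σ * F (extB T true σ)

/-- Expectation with respect to the Bernoulli product measure `μ = μ_q` of a
local function (junk value `0` for nonlocal functions). -/
def dExpGen {d : ℕ} (q : ℝ) (F : Config d → ℝ) : ℝ :=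
  if h : ∃ T : Finset (Site d), IsLocal F T then dExp q h.choose F else 0

/-- Conditioning on the origin being occupied. -/
def cond0 {d : ℕ} (F : Config d → ℝ) : Config d → ℝ :=
  fun η => F fun z => if z = 0 then true else η z

/-- Expectation with respect to `μ_0`, the measure `μ` conditioned on the
origin being occupied. -/
def dExpGen0 {d : ℕ} (q : ℝ) (F : Config d → ℝ) : ℝ := dExpGen q (cond0 F)

/-! ### The diffusion coefficient -/

/-- The integrand in the variational formula for the diffusion coefficient:
`Σ_α c_{0,e_α}(η) ( u·e_α (η(0) - η(e_α)) + Σ_x ∇_{0,e_α}(τ_x f)(η) )²`. -/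
def diffIntegrand {d : ℕ} (c : Rates d) (u : Fin d → ℝ) (f : Config d → ℝ)
    (η : Config d) : ℝ :=
  ∑ α : Fin d, c 0 (unit α) η *
    (u α * (ind (η 0) - ind (η (unit α))) +
      ∑' x : Site d, (f (tauC (-x) (exch 0 (unit α) η)) - f (tauC (-x) η))) ^ 2

/-- The set of values of the variational functional for the diffusion
coefficient, over all local functions `f`. -/
def diffSet {d : ℕ} (c : Rates d) (q : ℝ) (u : Fin d → ℝ) : Set ℝ :=
  {E | ∃ (f : Config d → ℝ) (S : Finset (Site d)), IsLocal f S ∧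
    E = dExpGen q (diffIntegrand c u f)}

/-- The diffusion coefficient `u ⬝ D u`, defined through the variational
formula. -/
def diffCoeff {d : ℕ} (c : Rates d) (q : ℝ) (u : Fin d → ℝ) : ℝ :=
  (1 / (2 * q * (1 - q))) * sInf (diffSet c q u)

/-! ### The self-diffusion coefficient -/

/-- The `2d` neighbours of the origin. -/
def nbhd (d : ℕ) : Finset (Site d) :=
  (Finset.univ.image fun i : Fin d => unit i) ∪ (Finset.univ.image fun i : Fin d => -unit i)

/-- The integrand in the variational formula for the self-diffusion
coefficient. -/
def selfIntegrand {d : ℕ} (c : Rates d) (u : Fin d → ℝ) (f : Config d → ℝ)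
    (η : Config d) : ℝ :=
  (∑' x : Site d, ∑ α : Fin d,
      if x ≠ 0 ∧ x + unit α ≠ 0 then
        c x (x + unit α) η * (f (exch x (x + unit α) η) - f η) ^ 2
      else 0) +
  ∑ y ∈ nbhd d, c 0 y η * (1 - ind (η y)) *
      (dot u y + f (tauC (-y) (exch 0 y η)) - f η) ^ 2

/-- The set of values of the variational functional for the self-diffusion
coefficient, over all local functions `f` on `{η : η(0) = 1}`. -/
def selfSet {d : ℕ} (c : Rates d) (q : ℝ) (u : Fin d → ℝ) : Set ℝ :=
  {E | ∃ (f : Config d → ℝ) (S : Finset (Site d)), IsLocal f S ∧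
    E = dExpGen0 q (selfIntegrand c u f)}

/-- The self-diffusion coefficient `u ⬝ D_s u`. -/
def selfDiff {d : ℕ} (c : Rates d) (q : ℝ) (u : Fin d → ℝ) : ℝ :=
  (1 / 2) * sInf (selfSet c q u)

/-! ### Generalized tracer models -/

/-- Action of a permutation of the sites on configurations: `(σζ)(y) = ζ(σ⁻¹ y)`. -/
def permAct {d : ℕ} (σ : Equiv.Perm (Site d)) (ζ : Config d) : Config d :=
  fun y => ζ (σ.symm y)

/-- A permutation of `ℤ^d` has finite range: it fixes all sites outside some
translate of `[-R', R']^d`. -/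
def FinRangePerm {d : ℕ} (σ : Equiv.Perm (Site d)) : Prop :=
  ∃ (x : Site d) (R' : ℕ), ∀ w, σ w ≠ w → ∀ i, |w i - x i| ≤ (R' : ℤ)

/-- The reversed permutation `σ' = τ_{-σ(0)} σ⁻¹ τ_{σ(0)}`. -/
def conjPerm {d : ℕ} (σ : Equiv.Perm (Site d)) : Equiv.Perm (Site d) :=
  (Equiv.addRight (σ 0)).trans (σ.symm.trans (Equiv.addRight (-(σ 0))))

/-- Summand of the variational functional of a generalized tracer model:
`ĉ_σ(ζ) (u·σ(0) + f(τ_{-σ(0)} σ ζ) - f(ζ))²`. -/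
def tracerSummand {d : ℕ} (chat : Equiv.Perm (Site d) → Config d → ℝ) (u : Fin d → ℝ)
    (σ : Equiv.Perm (Site d)) (f : Config d → ℝ) (ζ : Config d) : ℝ :=
  chat σ ζ * (dot u (σ 0) + f (tauC (-(σ 0)) (permAct σ ζ)) - f ζ) ^ 2

/-- Values of the variational functional for the self-diffusion coefficient of
a generalized tracer model, over all local functions. -/
def tracerSet {d : ℕ} (Ss : Set (Equiv.Perm (Site d)))
    (chat : Equiv.Perm (Site d) → Config d → ℝ) (q : ℝ) (u : Fin d → ℝ) : Set ℝ :=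
  {E | ∃ (f : Config d → ℝ) (S : Finset (Site d)), IsLocal f S ∧
    E = ∑' σ : Ss, dExpGen0 q (tracerSummand chat u (σ : Equiv.Perm (Site d)) f)}

/-- The self-diffusion coefficient `u ⬝ D̂_s u` of a generalized tracer model. -/
def tracerDs {d : ℕ} (Ss : Set (Equiv.Perm (Site d)))
    (chat : Equiv.Perm (Site d) → Config d → ℝ) (q : ℝ) (u : Fin d → ℝ) : ℝ :=
  (1 / 2) * sInf (tracerSet Ss chat q u)

/-! ### Moves on finite boxes -/

/-- A multistep move on the finite box `Λ` with boundary condition `bc`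
(all exchanges take place inside `Λ`; rates are evaluated on the extension of
the configuration by `bc` outside `Λ`, encoded in the domain). -/
structure MoveBox {d : ℕ} (c : Rates d) (Λ : Finset (Site d)) (bc : Bool) where
  T : ℕ
  Dom : Set (Config d)
  cfg : Config d → ℕ → Config d
  xs : Config d → ℕ → Site d
  es : Config d → ℕ → Site d
  dom_bc : ∀ a ∈ Dom, ∀ x, x ∉ Λ → a x = bc
  init : ∀ a ∈ Dom, cfg a 0 = a
  dir : ∀ a ∈ Dom, ∀ t, t < T → IsDir (es a t)
  mem : ∀ a ∈ Dom, ∀ t, t < T → xs a t ∈ Λ ∧ xs a t + es a t ∈ Λ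
  step : ∀ a ∈ Dom, ∀ t, t < T → cfg a (t + 1) = exch (xs a t) (xs a t + es a t) (cfg a t)
  rate : ∀ a ∈ Dom, ∀ t, t < T → 1 ≤ c (xs a t) (xs a t + es a t) (cfg a t)

/-- A multistep move on the finite box `Λ` with empty boundary conditions and
reservoirs: each step is either an allowed exchange inside `Λ`, or a flip of a
boundary site. -/
structure MoveRes {d : ℕ} (c : Rates d) (Λ : Finset (Site d)) where
  T : ℕ
  Dom : Set (Config d)
  cfg : Config d → ℕ → Config d
  xs : Config d → ℕ → Site d
  es : Config d → ℕ → Site d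
  dom_bc : ∀ a ∈ Dom, ∀ x, x ∉ Λ → a x = false
  init : ∀ a ∈ Dom, cfg a 0 = a
  step : ∀ a ∈ Dom, ∀ t, t < T →
    (xs a t ∈ Λ ∧ xs a t + es a t ∈ Λ ∧ IsDir (es a t) ∧
      cfg a (t + 1) = exch (xs a t) (xs a t + es a t) (cfg a t) ∧
      1 ≤ c (xs a t) (xs a t + es a t) (cfg a t)) ∨
    (isBdry Λ (xs a t) ∧ cfg a (t + 1) = flipAt (xs a t) (cfg a t))

end KCLGd

namespace KCLGd

/-- The sets `A_i^α` of the auxiliary dynamics: `A_i^α` is obtained from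
`A^α = {x_1^α, …, x_{n_α}^α}` by moving the first `i` points one step in the
direction `e_α`. -/
def Aset (d : ℕ) (nn : Fin d → ℕ) (xs : (α : Fin d) → Fin (nn α) → Site d)
    (α : Fin d) (i : ℕ) : Finset (Site d) :=
  ((Finset.univ.filter fun j : Fin (nn α) => (j : ℕ) < i).image fun j => xs α j + unit α) ∪
  ((Finset.univ.filter fun j : Fin (nn α) => i ≤ (j : ℕ)).image fun j => xs α j)

/-- Reduction of a lattice site modulo `L`: the projection `ℤ^d → (ℤ/Lℤ)^d`. -/
def torusCast (d L : ℕ) (x : Site d) : Fin d → ZMod L := fun j => (x j : ZMod L)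

/-!
Write `N_i` for the number of `x` with `x + A_i` empty. Since `A_{i+1}` arises from `A_i` by
moving the single site `x_{i+1}` to `x_{i+1} + e_α`, for every `x` the forward indicator of
`A_i → A_{i+1}` plus `[x + A_{i+1}` empty`]` equals the backward indicator plus
`[x + A_i` empty`]`. Summing over `x` and `i`, forward minus backward telescopes to
`N_0 - N_{n_α}`, which vanishes because `A_{n_α} = A_0 + e_α` and counting on the torus is
translation invariant.
-/

lemma torusCast_add (d L : ℕ) (x y : Site d) :
    torusCast d L (x + y) = torusCast d L x + torusCast d L y := by
  funext j
  simp [torusCast]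

lemma mem_Aset {d : ℕ} {nn : Fin d → ℕ} {xs : (α : Fin d) → Fin (nn α) → Site d}
    {α : Fin d} {i : ℕ} {y : Site d} :
    y ∈ Aset d nn xs α i ↔
      (∃ j : Fin (nn α), (j : ℕ) < i ∧ xs α j + unit α = y) ∨
      (∃ j : Fin (nn α), i ≤ (j : ℕ) ∧ xs α j = y) := by
  simp [Aset]

section Aset

variable {d : ℕ} {nn : Fin d → ℕ} {xs : (α : Fin d) → Fin (nn α) → Site d} {α : Fin d}

lemma xs_mem_Aset (i : Fin (nn α)) : xs α i ∈ Aset d nn xs α i :=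
  mem_Aset.mpr (Or.inr ⟨i, le_rfl, rfl⟩)

lemma xs_add_unit_mem_Aset_succ (i : Fin (nn α)) :
    xs α i + unit α ∈ Aset d nn xs α (i + 1) :=
  mem_Aset.mpr (Or.inl ⟨i, Nat.lt_succ_self _, rfl⟩)

lemma Aset_succ_subset_insert (i : Fin (nn α)) :
    Aset d nn xs α (i + 1) ⊆ insert (xs α i + unit α) (Aset d nn xs α i) := by
  intro y hy
  rw [Finset.mem_insert, mem_Aset]
  rcases mem_Aset.mp hy with ⟨j, hj, rfl⟩ | ⟨j, hj, rfl⟩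
  · rcases Nat.lt_succ_iff_lt_or_eq.mp hj with hlt | heq
    · exact Or.inr (Or.inl ⟨j, hlt, rfl⟩)
    · exact Or.inl (by rw [Fin.ext heq])
  · exact Or.inr (Or.inr ⟨j, Nat.le_of_succ_le hj, rfl⟩)

lemma Aset_subset_insert_succ (i : Fin (nn α)) :
    Aset d nn xs α i ⊆ insert (xs α i) (Aset d nn xs α (i + 1)) := by
  intro y hy
  rw [Finset.mem_insert, mem_Aset]
  rcases mem_Aset.mp hy with ⟨j, hj, rfl⟩ | ⟨j, hj, rfl⟩
  · exact Or.inr (Or.inl ⟨j, Nat.lt_succ_of_lt hj, rfl⟩)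
  · rcases hj.lt_or_eq with hlt | heq
    · exact Or.inr (Or.inr ⟨j, hlt, rfl⟩)
    · exact Or.inl (by rw [Fin.ext heq])

lemma Aset_last :
    Aset d nn xs α (nn α) = (Aset d nn xs α 0).map (addRightEmbedding (unit α)) := by
  ext y
  simp only [Finset.mem_map, addRightEmbedding_apply, mem_Aset]
  constructor
  · rintro (⟨j, -, rfl⟩ | ⟨j, hj, -⟩)
    · exact ⟨xs α j, Or.inr ⟨j, Nat.zero_le _, rfl⟩, rfl⟩
    · exact absurd hj (not_le.mpr j.isLt)
  · rintro ⟨_, ⟨j, hj, -⟩ | ⟨j, -, rfl⟩, rfl⟩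
    · exact absurd hj (Nat.not_lt_zero _)
    · exact Or.inl ⟨j, j.isLt, rfl⟩

end Aset

def vacantCount {G H : Type*} [AddCommGroup G] [Fintype G] (φ : H → G) (η : G → Bool)
    (S : Finset H) : ℕ :=
  ∑ x : G, if ∀ y ∈ S, η (x + φ y) = false then 1 else 0

lemma vacantCount_map_addRight {G H : Type*} [AddCommGroup G] [Fintype G]
    [AddRightCancelSemigroup H] {φ : H → G} {v : H} (hφ : ∀ y, φ (y + v) = φ y + φ v)
    (η : G → Bool) (S : Finset H) :
    vacantCount φ η (S.map (addRightEmbedding v)) = vacantCount φ η S := by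
  refine Fintype.sum_equiv (Equiv.addRight (φ v)) _ _ fun x => ?_
  simp only [Finset.forall_mem_map, addRightEmbedding_apply, hφ, Equiv.coe_addRight,
    add_assoc, add_comm (φ v)]

/-- Both sides equal `[P empty] + [Q empty] - [P ∪ Q empty]`. -/
lemma forward_add_vacant_eq_backward_add_vacant {H : Type*} [DecidableEq H] (ζ : H → Bool)
    {P Q : Finset H} {u v : H} (hu : u ∈ Q) (hv : v ∈ P) (hQP : Q ⊆ insert u P)
    (hPQ : P ⊆ insert v Q) :
    ((if (∀ y ∈ P, ζ y = false) ∧ ζ u = true then 1 else 0) +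
        if ∀ y ∈ Q, ζ y = false then 1 else 0 : ℕ) =
      (if (∀ y ∈ Q, ζ y = false) ∧ ζ v = true then 1 else 0) +
        if ∀ y ∈ P, ζ y = false then 1 else 0 := by
  have vacant_of_insert {S T : Finset H} {w : H} (hST : S ⊆ insert w T)
      (hT : ∀ y ∈ T, ζ y = false) (hw : ζ w = false) : ∀ y ∈ S, ζ y = false := by
    intro y hy
    rcases Finset.mem_insert.mp (hST hy) with rfl | hyT
    exacts [hw, hT y hyT]
  by_cases hP : ∀ y ∈ P, ζ y = false <;> by_cases hQ : ∀ y ∈ Q, ζ y = false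
  · simp only [eq_true hP, eq_true hQ, hP v hv, hQ u hu, Bool.false_eq_true, and_false, if_false,
      if_true]
  · have : ζ u = true := by simpa using mt (vacant_of_insert hQP hP) hQ
    simp only [eq_true hP, eq_false hQ, this, and_true, false_and, if_false, if_true]
  · have : ζ v = true := by simpa using mt (vacant_of_insert hPQ hQ) hP
    simp only [eq_false hP, eq_true hQ, this, and_true, false_and, if_false, if_true]
  · simp only [eq_false hP, eq_false hQ, false_and, if_false]

lemma Fin.sum_eq_sum_of_add_succ_eq {M : Type*} [AddCancelCommMonoid M] {n : ℕ}
    (f g : Fin n → M) (a : ℕ → M) (h : ∀ i : Fin n, f i + a (i + 1) = g i + a i)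
    (hper : a n = a 0) : ∑ i, f i = ∑ i, g i := by
  have hsum : ∑ i, f i + ∑ i : Fin n, a (i + 1) = ∑ i, g i + ∑ i : Fin n, a i := by
    rw [← Finset.sum_add_distrib, ← Finset.sum_add_distrib]
    exact Finset.sum_congr rfl fun i _ => h i
  have htel : ∑ i : Fin n, a (i + 1) = ∑ i : Fin n, a i := by
    rw [Fin.sum_univ_eq_sum_range (fun i => a (i + 1)), Fin.sum_univ_eq_sum_range a]
    apply add_right_cancel (b := a 0)
    rw [← Finset.sum_range_succ', Finset.sum_range_succ, hper]
  exact add_right_cancel (htel ▸ hsum)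

theorem zero_current_on_torus_general (d : ℕ) (L : ℕ) [NeZero L]
    (nn : Fin d → ℕ) (xs : (α : Fin d) → Fin (nn α) → Site d)
    (η : (Fin d → ZMod L) → Bool) (α : Fin d) :
    (∑ i : Fin (nn α), ∑ x : Fin d → ZMod L,
        if (∀ y ∈ Aset d nn xs α (i : ℕ), η (x + torusCast d L y) = false) ∧
            η (x + torusCast d L (xs α i + unit α)) = true then 1 else 0) =
    (∑ i : Fin (nn α), ∑ x : Fin d → ZMod L,
        if (∀ y ∈ Aset d nn xs α ((i : ℕ) + 1), η (x + torusCast d L y) = false) ∧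
            η (x + torusCast d L (xs α i)) = true then 1 else 0) := by
  refine Fin.sum_eq_sum_of_add_succ_eq _ _
    (fun i => vacantCount (torusCast d L) η (Aset d nn xs α i)) (fun i => ?_) ?_
  · rw [vacantCount, vacantCount, ← Finset.sum_add_distrib, ← Finset.sum_add_distrib]
    refine Finset.sum_congr rfl fun x _ => ?_
    -- `convert` only reconciles the `Decidable` instances of the `if`s
    convert forward_add_vacant_eq_backward_add_vacant (fun y => η (x + torusCast d L y))
      (xs_add_unit_mem_Aset_succ i) (xs_mem_Aset i) (Aset_succ_subset_insert i)
      (Aset_subset_insert_succ i) using 3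
  · rw [Aset_last]
    exact vacantCount_map_addRight (fun y => torusCast_add d L y (unit α)) η _

/-- On the torus `(ℤ/Lℤ)^d`, for every configuration `η` and every
direction `α`, the total rate of forward transitions of the auxiliary dynamics equals
the total rate of backward transitions: the total particle current vanishes. -/
theorem zero_current_on_torus (d : ℕ) (L : ℕ) [NeZero L]
    (nn : Fin d → ℕ) (xs : (α : Fin d) → Fin (nn α) → Site d)
    (hord : ∀ (α : Fin d) (i j : Fin (nn α)), i ≤ j → (xs α j) α ≤ (xs α i) α)
    (hinj : ∀ α, Function.Injective (xs α))
    (hemb : ∀ (α : Fin d) (i : Fin (nn α)),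
      Set.InjOn (torusCast d L)
        ↑(Aset d nn xs α (i : ℕ) ∪ Aset d nn xs α ((i : ℕ) + 1) ∪
          {xs α i, xs α i + unit α}))
    (η : (Fin d → ZMod L) → Bool) (α : Fin d) :
    (∑ i : Fin (nn α), ∑ x : Fin d → ZMod L,
        if (∀ y ∈ Aset d nn xs α (i : ℕ), η (x + torusCast d L y) = false) ∧
            η (x + torusCast d L (xs α i + unit α)) = true then 1 else 0) =
    (∑ i : Fin (nn α), ∑ x : Fin d → ZMod L,
        if (∀ y ∈ Aset d nn xs α ((i : ℕ) + 1), η (x + torusCast d L y) = false) ∧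
            η (x + torusCast d L (xs α i)) = true then 1 else 0) :=
  zero_current_on_torus_general d L nn xs η α

end KCLGd
end
end

section
/- Fix a finite set Ĉ ⊂ Z^d \ {0} and finite-range permutations σ_1,…,σ_d of Z^d with σ_i(0) = e_i and σ_i(Ĉ) = e_i + Ĉ; set σ_{−i} = τ_{−e_i} σ_i^{−1} τ_{e_i}, Σ = {σ_{±1},…,σ_{±d}}, and ĉ_σ(ζ) = 1 if Ĉ is empty for ζ and 0 otherwise. Then for every u ∈ ℝ^d the infimum over local functions f on {ζ : ζ(0)=1} of Σ_{σ∈Σ} μ_0[ 1[Ĉ empty for ζ] ( u·σ(0) + f(τ_{−σ(0)} σ ζ) − f(ζ) )² ] equals 2 q^{|Ĉ|} ‖u‖², and is attained at constant f; equivalently, the self-diffusion coefficient of this auxiliary tracer model satisfies u·D̂_s u = q^{|Ĉ|} ‖u‖², and in particular u·D̂_s u ≥ (1/2) q^{|Ĉ|} ‖u‖² > 0 for u ≠ 0. -/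
noncomputable section
open scoped Classical

namespace KCLGd

/-- The permutation family `Σ = {σ_{±1}, …, σ_{±d}}`. -/
def auxSigma {d : ℕ} (σs : Fin d → Equiv.Perm (Site d)) : Set (Equiv.Perm (Site d)) :=
  {σ | ∃ i, σ = σs i ∨ σ = conjPerm (σs i)}

/-- The rate `ĉ_σ(ζ) = 1` if `Ĉ` is empty for `ζ` and `0` otherwise. -/
def auxRate {d : ℕ} (Chat : Finset (Site d)) : Equiv.Perm (Site d) → Config d → ℝ :=
  fun _ ζ => if ∀ y ∈ Chat, ζ y = false then 1 else 0

/-!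
Write `ρ_σ` for the relabelling of sites with `τ_{-σ(0)} σ ζ = ζ ∘ ρ_σ`. It fixes the
origin, so `μ_0` is `ρ_σ`-invariant, and `σ(Ĉ) = σ(0) + Ĉ` says exactly that `ρ_σ` maps `Ĉ`
onto itself, so the indicator `1_Ĉ` that `Ĉ` is empty is `ρ_σ`-invariant too. Expanding the square,
the cross term `2 u·σ(0) μ_0[1_Ĉ (f ∘ ρ_σ - f)]` therefore vanishes and
`μ_0[ĉ_σ (u·σ(0) + f ∘ ρ_σ - f)²] = (u·σ(0))² q^|Ĉ| + μ_0[1_Ĉ (f ∘ ρ_σ - f)²]`.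
Summing over `σ_{±i}`, with `σ_{±i}(0) = ±e_i`, gives `2 q^|Ĉ| ‖u‖²` plus a nonnegative
remainder that vanishes for constant `f`.
-/

section Locality

variable {d : ℕ} {F G : Config d → ℝ} {S T : Finset (Site d)}

theorem IsLocal.mono (hF : IsLocal F S) (hST : S ⊆ T) : IsLocal F T :=
  fun η η' h => hF η η' fun x hx => h x (hST hx)

theorem IsLocal.comp (hF : IsLocal F S) (g : ℝ → ℝ) : IsLocal (fun η => g (F η)) S :=
  fun η η' h => congrArg g (hF η η' h)

theorem IsLocal.comp₂ (hF : IsLocal F S) (hG : IsLocal G T) (op : ℝ → ℝ → ℝ) :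
    IsLocal (fun η => op (F η) (G η)) (S ∪ T) := fun η η' h => by
  dsimp only
  rw [hF η η' fun x hx => h x (Finset.mem_union_left T hx),
    hG η η' fun x hx => h x (Finset.mem_union_right S hx)]

theorem IsLocal.comp_perm (hF : IsLocal F S) (ρ : Equiv.Perm (Site d)) :
    IsLocal (fun η => F (η ∘ ρ)) (S.image ρ) := fun _ _ h =>
  hF _ _ fun x hx => h (ρ x) (Finset.mem_image_of_mem ρ hx)

theorem IsLocal.cond0 (hF : IsLocal F S) : IsLocal (cond0 F) S := fun η η' h =>
  hF _ _ fun x hx => by simp only [h x hx]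

end Locality

section Expectation

variable {d : ℕ} {F G : Config d → ℝ} {S T : Finset (Site d)}

theorem dExp_insert (q : ℝ) (hF : IsLocal F T) {a : Site d} (ha : a ∉ T) :
    dExp q (insert a T) F = dExp q T F := by
  let e : ({x // x ∈ insert a T} → Bool) ≃ Bool × ({x // x ∈ T} → Bool) :=
    ((Finset.subtypeInsertEquivOption ha).arrowCongr (Equiv.refl Bool)).trans
      Equiv.piOptionEquivProd
  have hwt : ∀ p, wt q (insert a T) (e.symm p) = (if p.1 then 1 - q else q) * wt q T p.2 := by
    rintro ⟨b, τ⟩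
    rw [wt, wt, ← (Finset.subtypeInsertEquivOption ha).symm.prod_comp, Fintype.prod_option]
    simp [e]
  have hext : ∀ p, F (extB (insert a T) true (e.symm p)) = F (extB T true p.2) := by
    rintro ⟨b, τ⟩
    refine hF _ _ fun x hx => ?_
    simp [extB, e, hx, Finset.subtypeInsertEquivOption, ne_of_mem_of_not_mem hx ha]
  rw [dExp, ← e.symm.sum_comp, Fintype.sum_prod_type, Fintype.sum_bool]
  simp only [hwt, hext, if_true, Bool.false_eq_true, if_false, mul_assoc, ← Finset.mul_sum]
  rw [dExp]
  ring

theorem dExp_of_subset (q : ℝ) (hF : IsLocal F S) (hST : S ⊆ T) : dExp q T F = dExp q S F := by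
  suffices h : ∀ U : Finset (Site d), dExp q (S ∪ U) F = dExp q S F by
    rw [← h T, Finset.union_eq_right.mpr hST]
  intro U
  induction U using Finset.induction_on with
  | empty => rw [Finset.union_empty]
  | insert a U _ ih =>
    rw [Finset.union_insert]
    by_cases ha : a ∈ S ∪ U
    · rw [Finset.insert_eq_of_mem ha, ih]
    · rw [dExp_insert q (hF.mono Finset.subset_union_left) ha, ih]

theorem dExpGen_eq (q : ℝ) (hF : IsLocal F S) : dExpGen q F = dExp q S F := by
  have hex : ∃ T, IsLocal F T := ⟨S, hF⟩
  rw [dExpGen, dif_pos hex, ← dExp_of_subset q hex.choose_spec Finset.subset_union_left,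
    dExp_of_subset q hF Finset.subset_union_right]

theorem dExpGen_add (q : ℝ) (hF : IsLocal F S) (hG : IsLocal G T) :
    dExpGen q (fun η => F η + G η) = dExpGen q F + dExpGen q G := by
  rw [dExpGen_eq q (hF.comp₂ hG (· + ·)), dExpGen_eq q (hF.mono Finset.subset_union_left),
    dExpGen_eq q (hG.mono Finset.subset_union_right), dExp, dExp, dExp, ← Finset.sum_add_distrib]
  simp only [mul_add]

theorem dExpGen_sub (q : ℝ) (hF : IsLocal F S) (hG : IsLocal G T) :
    dExpGen q (fun η => F η - G η) = dExpGen q F - dExpGen q G := by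
  rw [dExpGen_eq q (hF.comp₂ hG (· - ·)), dExpGen_eq q (hF.mono Finset.subset_union_left),
    dExpGen_eq q (hG.mono Finset.subset_union_right), dExp, dExp, dExp, ← Finset.sum_sub_distrib]
  simp only [mul_sub]

theorem dExpGen_const_mul (q c : ℝ) (hF : IsLocal F S) :
    dExpGen q (fun η => c * F η) = c * dExpGen q F := by
  rw [dExpGen_eq q (hF.comp (c * ·)), dExpGen_eq q hF, dExp, dExp, Finset.mul_sum]
  exact Finset.sum_congr rfl fun _ _ => mul_left_comm _ _ _

theorem dExpGen_const (q c : ℝ) : dExpGen q (fun _ : Config d => c) = c := by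
  rw [dExpGen_eq q (S := ∅) fun _ _ _ => rfl]
  simp [dExp, wt]

theorem dExpGen_nonneg {q : ℝ} (hq0 : 0 ≤ q) (hq1 : q ≤ 1) (hF : ∀ η, 0 ≤ F η) :
    0 ≤ dExpGen q F := by
  unfold dExpGen
  split_ifs
  · refine Finset.sum_nonneg fun σ _ => mul_nonneg (Finset.prod_nonneg fun x _ => ?_) (hF _)
    split_ifs <;> linarith
  · exact le_rfl

theorem dExp_comp_perm (q : ℝ) (ρ : Equiv.Perm (Site d)) (hF : IsLocal F S) :
    dExp q (S.image ρ) (fun η => F (η ∘ ρ)) = dExp q S F := by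
  let e : {x // x ∈ S} ≃ {x // x ∈ S.image ρ} :=
    ρ.subtypeEquiv fun _ => ρ.injective.mem_finset_image.symm
  rw [dExp, ← (e.arrowCongr (Equiv.refl Bool)).sum_comp]
  refine Finset.sum_congr rfl fun τ _ => ?_
  congr 1
  · exact (Fintype.prod_equiv e _ _ fun x => by simp).symm
  · exact hF _ _ fun x hx => by simp [extB, hx, e]

theorem dExpGen_comp_perm (q : ℝ) (ρ : Equiv.Perm (Site d)) (hF : IsLocal F S) :
    dExpGen q (fun η => F (η ∘ ρ)) = dExpGen q F := by
  rw [dExpGen_eq q (hF.comp_perm ρ), dExpGen_eq q hF, dExp_comp_perm q ρ hF]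

end Expectation

section Conditioned

variable {d : ℕ} {F G : Config d → ℝ} {S T : Finset (Site d)}

theorem cond0_comp_perm {ρ : Equiv.Perm (Site d)} (hρ : ρ 0 = 0) (F : Config d → ℝ) :
    cond0 (fun η => F (η ∘ ρ)) = fun η => cond0 F (η ∘ ρ) := by
  funext η
  simp only [cond0]
  congr 1
  funext y
  simp [ρ.injective.eq_iff' hρ]

theorem dExpGen0_add (q : ℝ) (hF : IsLocal F S) (hG : IsLocal G T) :
    dExpGen0 q (fun η => F η + G η) = dExpGen0 q F + dExpGen0 q G :=
  dExpGen_add q hF.cond0 hG.cond0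

theorem dExpGen0_sub (q : ℝ) (hF : IsLocal F S) (hG : IsLocal G T) :
    dExpGen0 q (fun η => F η - G η) = dExpGen0 q F - dExpGen0 q G :=
  dExpGen_sub q hF.cond0 hG.cond0

theorem dExpGen0_const_mul (q c : ℝ) (hF : IsLocal F S) :
    dExpGen0 q (fun η => c * F η) = c * dExpGen0 q F :=
  dExpGen_const_mul q c hF.cond0

theorem dExpGen0_const (q c : ℝ) : dExpGen0 q (fun _ : Config d => c) = c :=
  dExpGen_const q c

theorem dExpGen0_nonneg {q : ℝ} (hq0 : 0 ≤ q) (hq1 : q ≤ 1) (hF : ∀ η, 0 ≤ F η) :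
    0 ≤ dExpGen0 q F :=
  dExpGen_nonneg hq0 hq1 fun _ => hF _

theorem dExpGen0_comp_perm (q : ℝ) {ρ : Equiv.Perm (Site d)} (hρ : ρ 0 = 0)
    (hF : IsLocal F S) : dExpGen0 q (fun η => F (η ∘ ρ)) = dExpGen0 q F := by
  rw [dExpGen0, cond0_comp_perm hρ]
  exact dExpGen_comp_perm q ρ hF.cond0

end Conditioned

section EmptyIndicator

variable {d : ℕ} {C : Finset (Site d)}

def emptyInd (C : Finset (Site d)) (η : Config d) : ℝ :=
  if ∀ y ∈ C, η y = false then 1 else 0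

theorem emptyInd_nonneg (C : Finset (Site d)) (η : Config d) : 0 ≤ emptyInd C η := by
  unfold emptyInd
  split_ifs <;> norm_num

theorem isLocal_emptyInd (C : Finset (Site d)) : IsLocal (emptyInd C) C := fun η η' h => by
  simp only [emptyInd]
  congr 1
  exact propext (forall₂_congr fun y hy => by rw [h y hy])

theorem emptyInd_comp_perm {ρ : Equiv.Perm (Site d)} (hC : C.image ρ = C) (η : Config d) :
    emptyInd C (η ∘ ρ) = emptyInd C η := by
  conv_rhs => rw [← hC]
  simp [emptyInd]

theorem cond0_emptyInd (h0 : (0 : Site d) ∉ C) : cond0 (emptyInd C) = emptyInd C := by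
  funext η
  simp only [cond0, emptyInd]
  congr 1
  exact propext (forall₂_congr fun y hy => by rw [if_neg (ne_of_mem_of_not_mem hy h0)])

theorem dExp_emptyInd (q : ℝ) (C : Finset (Site d)) : dExp q C (emptyInd C) = q ^ C.card := by
  have hempty : ∀ σ : {x // x ∈ C} → Bool,
      (∀ y ∈ C, extB C true σ y = false) ↔ σ = fun _ => false := fun σ => by
    simp +contextual [extB, funext_iff]
  simp only [dExp, emptyInd, hempty, mul_ite, mul_one, mul_zero, Finset.sum_ite_eq',
    Finset.mem_univ, if_true, wt]
  simp

theorem dExpGen0_emptyInd (q : ℝ) (h0 : (0 : Site d) ∉ C) :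
    dExpGen0 q (emptyInd C) = q ^ C.card := by
  rw [dExpGen0, cond0_emptyInd h0, dExpGen_eq q (isLocal_emptyInd C), dExp_emptyInd]

end EmptyIndicator

section AuxiliaryTracer

variable {d : ℕ} {C : Finset (Site d)} {σ : Equiv.Perm (Site d)}

def tracerPerm (σ : Equiv.Perm (Site d)) : Equiv.Perm (Site d) :=
  (Equiv.addRight (σ 0)).trans σ.symm

theorem tauC_permAct (σ : Equiv.Perm (Site d)) (ζ : Config d) :
    tauC (-(σ 0)) (permAct σ ζ) = ζ ∘ tracerPerm σ := by
  funext w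
  simp [tauC, permAct, tracerPerm]

theorem tracerPerm_zero (σ : Equiv.Perm (Site d)) : tracerPerm σ 0 = 0 := by
  simp [tracerPerm]

theorem conjPerm_zero (σ : Equiv.Perm (Site d)) : conjPerm σ 0 = -σ 0 := by
  simp [conjPerm]

theorem tracerPerm_conjPerm (σ : Equiv.Perm (Site d)) :
    tracerPerm (conjPerm σ) = (tracerPerm σ).symm := by
  refine Equiv.ext fun w => ?_
  rw [Equiv.eq_symm_apply]
  simp [tracerPerm, conjPerm]

theorem image_tracerPerm (him : C.image σ = C.image (σ 0 + ·)) :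
    C.image (tracerPerm σ) = C := by
  have hcomp : ⇑(tracerPerm σ) = σ.symm ∘ (σ 0 + ·) := by
    funext w
    simp [tracerPerm, add_comm]
  rw [hcomp, ← Finset.image_image, ← him, Finset.image_image]
  simp

theorem image_tracerPerm_conjPerm (hC : C.image (tracerPerm σ) = C) :
    C.image (tracerPerm (conjPerm σ)) = C := by
  rw [tracerPerm_conjPerm]
  conv_lhs => rw [← hC]
  simp [Finset.image_image]

theorem tracerSummand_auxRate (hC : C.image (tracerPerm σ) = C) (u : Fin d → ℝ)
    (f : Config d → ℝ) :
    tracerSummand (auxRate C) u σ f = fun η =>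
      dot u (σ 0) ^ 2 * emptyInd C η +
        2 * dot u (σ 0) * (emptyInd C (η ∘ tracerPerm σ) * f (η ∘ tracerPerm σ) -
          emptyInd C η * f η) +
        emptyInd C η * (f (η ∘ tracerPerm σ) - f η) ^ 2 := by
  funext η
  rw [tracerSummand, tauC_permAct, emptyInd_comp_perm hC]
  simp only [auxRate, emptyInd]
  ring

theorem dExpGen0_tracerSummand_auxRate (q : ℝ) (h0 : (0 : Site d) ∉ C)
    (hC : C.image (tracerPerm σ) = C) (u : Fin d → ℝ) {f : Config d → ℝ}
    {S : Finset (Site d)} (hf : IsLocal f S) :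
    dExpGen0 q (tracerSummand (auxRate C) u σ f) = dot u (σ 0) ^ 2 * q ^ C.card +
      dExpGen0 q (fun η => emptyInd C η * (f (η ∘ tracerPerm σ) - f η) ^ 2) := by
  have hI := isLocal_emptyInd C
  have hG : IsLocal (fun η => emptyInd C η * f η) (C ∪ S) := hI.comp₂ hf (· * ·)
  have hGρ := hG.comp_perm (tracerPerm σ)
  have hR := hI.comp₂ ((hf.comp_perm (tracerPerm σ)).comp₂ hf fun x y => (x - y) ^ 2) (· * ·)
  have hA := hI.comp (dot u (σ 0) ^ 2 * ·)
  have hB := (hGρ.comp₂ hG (· - ·)).comp (2 * dot u (σ 0) * ·)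
  rw [tracerSummand_auxRate hC, dExpGen0_add q (hA.comp₂ hB (· + ·)) hR, dExpGen0_add q hA hB,
    dExpGen0_const_mul q _ hI, dExpGen0_const_mul q _ (hGρ.comp₂ hG (· - ·)),
    dExpGen0_sub q hGρ hG, dExpGen0_comp_perm q (tracerPerm_zero σ) hG, dExpGen0_emptyInd q h0]
  ring

theorem sq_dot_mul_le_dExpGen0_tracerSummand {q : ℝ} (hq0 : 0 ≤ q) (hq1 : q ≤ 1)
    (h0 : (0 : Site d) ∉ C) (hC : C.image (tracerPerm σ) = C) (u : Fin d → ℝ)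
    {f : Config d → ℝ} {S : Finset (Site d)} (hf : IsLocal f S) :
    dot u (σ 0) ^ 2 * q ^ C.card ≤ dExpGen0 q (tracerSummand (auxRate C) u σ f) := by
  rw [dExpGen0_tracerSummand_auxRate q h0 hC u hf]
  exact le_add_of_nonneg_right <| dExpGen0_nonneg hq0 hq1 fun η =>
    mul_nonneg (emptyInd_nonneg C η) (sq_nonneg _)

theorem dExpGen0_tracerSummand_auxRate_zero (q : ℝ) (h0 : (0 : Site d) ∉ C)
    (hC : C.image (tracerPerm σ) = C) (u : Fin d → ℝ) :
    dExpGen0 q (tracerSummand (auxRate C) u σ fun _ => 0) = dot u (σ 0) ^ 2 * q ^ C.card := by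
  rw [dExpGen0_tracerSummand_auxRate q h0 hC u (S := ∅) fun _ _ _ => rfl]
  simp [dExpGen0_const]

end AuxiliaryTracer

section AuxSigma

variable {d : ℕ} {σs : Fin d → Equiv.Perm (Site d)}

theorem unit_injective : Function.Injective (unit : Fin d → Site d) := fun i j h => by
  simpa [unit] using congrFun h i

theorem unit_ne_neg_unit (i j : Fin d) : unit i ≠ -unit j := fun h => by
  have hi := congrFun h i
  simp only [unit, Pi.neg_apply] at hi
  split_ifs at hi <;> omega

theorem dot_unit (u : Fin d → ℝ) (i : Fin d) : dot u (unit i) = u i := by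
  simp [dot, unit]

theorem dot_neg (u : Fin d → ℝ) (y : Site d) : dot u (-y) = -dot u y := by
  simp [dot]

theorem auxSigma_eq_range (σs : Fin d → Equiv.Perm (Site d)) :
    auxSigma σs = Set.range (Sum.elim σs (conjPerm ∘ σs)) := by
  ext σ
  simp [auxSigma, exists_or, eq_comm]

instance (σs : Fin d → Equiv.Perm (Site d)) : Finite (auxSigma σs) := by
  rw [auxSigma_eq_range]
  infer_instance

theorem tsum_auxSigma (h0i : ∀ i, σs i 0 = unit i) (F : Equiv.Perm (Site d) → ℝ) :
    ∑' σ : auxSigma σs, F σ = ∑ i, (F (σs i) + F (conjPerm (σs i))) := by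
  have hzero : (fun σ : Equiv.Perm (Site d) => σ 0) ∘ Sum.elim σs (conjPerm ∘ σs) =
      Sum.elim unit (fun i => -unit i) := by
    funext x
    cases x <;> simp [h0i, conjPerm_zero]
  have hinj : Function.Injective (Sum.elim σs (conjPerm ∘ σs)) := by
    refine Function.Injective.of_comp (f := fun σ : Equiv.Perm (Site d) => σ 0) ?_
    rw [hzero]
    exact unit_injective.sumElim (neg_injective.comp unit_injective) unit_ne_neg_unit
  rw [auxSigma_eq_range, tsum_range F hinj, tsum_fintype, Fintype.sum_sum_type,
    ← Finset.sum_add_distrib]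
  rfl

end AuxSigma

theorem auxiliary_tracer_self_diffusion_general (d : ℕ)
    (Chat : Finset (Site d)) (h0 : (0 : Site d) ∉ Chat)
    (σs : Fin d → Equiv.Perm (Site d))
    (h0i : ∀ i, σs i 0 = unit i)
    (him : ∀ i, Finset.image (⇑(σs i)) Chat = Finset.image (fun y => unit i + y) Chat) :
    ∀ q ∈ Set.Ioo (0 : ℝ) 1, ∀ u : Fin d → ℝ,
      (∑' σ : auxSigma σs, dExpGen0 q
          (tracerSummand (auxRate Chat) u (σ : Equiv.Perm (Site d)) fun _ => 0)) =
        2 * q ^ Chat.card * ∑ α, (u α) ^ 2 ∧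
      sInf (tracerSet (auxSigma σs) (auxRate Chat) q u) =
        2 * q ^ Chat.card * ∑ α, (u α) ^ 2 ∧
      tracerDs (auxSigma σs) (auxRate Chat) q u = q ^ Chat.card * ∑ α, (u α) ^ 2 ∧
      (u ≠ 0 → 0 < tracerDs (auxSigma σs) (auxRate Chat) q u) := by
  intro q hq u
  have hC (σ : auxSigma σs) : Chat.image (tracerPerm σ) = Chat := by
    obtain ⟨σ, i, rfl | rfl⟩ := σ
    · exact image_tracerPerm (by rw [h0i]; exact him i)
    · exact image_tracerPerm_conjPerm (image_tracerPerm (by rw [h0i]; exact him i))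
  have hsum : ∑' σ : auxSigma σs, dot u ((σ : Equiv.Perm (Site d)) 0) ^ 2 * q ^ Chat.card =
      2 * q ^ Chat.card * ∑ α, u α ^ 2 := by
    rw [tsum_auxSigma h0i fun σ => dot u (σ 0) ^ 2 * q ^ Chat.card, Finset.mul_sum]
    simp only [h0i, conjPerm_zero, dot_neg, dot_unit, neg_sq]
    exact Finset.sum_congr rfl fun _ _ => by ring
  have hconst : ∑' σ : auxSigma σs, dExpGen0 q
      (tracerSummand (auxRate Chat) u (σ : Equiv.Perm (Site d)) fun _ => 0) =
        2 * q ^ Chat.card * ∑ α, u α ^ 2 :=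
    hsum ▸ tsum_congr fun σ => dExpGen0_tracerSummand_auxRate_zero q h0 (hC σ) u
  have hleast : IsLeast (tracerSet (auxSigma σs) (auxRate Chat) q u)
      (2 * q ^ Chat.card * ∑ α, u α ^ 2) := by
    refine ⟨⟨fun _ => 0, ∅, fun _ _ _ => rfl, hconst.symm⟩, ?_⟩
    rintro _ ⟨f, S, hf, rfl⟩
    rw [← hsum]
    exact Summable.tsum_le_tsum (fun σ => sq_dot_mul_le_dExpGen0_tracerSummand hq.1.le hq.2.le
      h0 (hC σ) u hf) .of_finite .of_finite
  have hDs : tracerDs (auxSigma σs) (auxRate Chat) q u = q ^ Chat.card * ∑ α, u α ^ 2 := by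
    rw [tracerDs, hleast.csInf_eq]
    ring
  refine ⟨hconst, hleast.csInf_eq, hDs, fun hu => ?_⟩
  obtain ⟨i, hi⟩ := Function.ne_iff.mp hu
  rw [hDs]
  exact mul_pos (pow_pos hq.1 _) <|
    Finset.sum_pos' (fun _ _ => sq_nonneg _) ⟨i, Finset.mem_univ i, sq_pos_of_ne_zero hi⟩

/-- For the auxiliary tracer model attached to `Ĉ` and the
permutations `σ_{±1}, …, σ_{±d}`, the variational infimum is attained at constant `f`
and equals `2 q^{|Ĉ|} ‖u‖²`; equivalently `u·D̂_s u = q^{|Ĉ|} ‖u‖²`, which is positive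
for `u ≠ 0`. -/
theorem auxiliary_tracer_self_diffusion (d : ℕ) (hd : 0 < d)
    (Chat : Finset (Site d)) (h0 : (0 : Site d) ∉ Chat)
    (σs : Fin d → Equiv.Perm (Site d))
    (hfr : ∀ i, FinRangePerm (σs i))
    (h0i : ∀ i, σs i 0 = unit i)
    (him : ∀ i, Finset.image (⇑(σs i)) Chat = Finset.image (fun y => unit i + y) Chat) :
    ∀ q ∈ Set.Ioo (0 : ℝ) 1, ∀ u : Fin d → ℝ,
      (∑' σ : auxSigma σs, dExpGen0 q
          (tracerSummand (auxRate Chat) u (σ : Equiv.Perm (Site d)) fun _ => 0)) =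
        2 * q ^ Chat.card * ∑ α, (u α) ^ 2 ∧
      sInf (tracerSet (auxSigma σs) (auxRate Chat) q u) =
        2 * q ^ Chat.card * ∑ α, (u α) ^ 2 ∧
      tracerDs (auxSigma σs) (auxRate Chat) q u = q ^ Chat.card * ∑ α, (u α) ^ 2 ∧
      (u ≠ 0 → 0 < tracerDs (auxSigma σs) (auxRate Chat) q u) :=
  auxiliary_tracer_self_diffusion_general d Chat h0 σs h0i him

end KCLGd
end
end
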